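/- arXiv:2505.13095 — 2 statements merged into one kernel-verified Lean document; each statement's English description precedes it below -/
import Mathlib

section
/- Let f be a family of functions assigning a nonnegative real number f(v) to each finitely-indexed family v of nonnegative reals, and let C_f be the associated convex roof coherence measure. Suppose that for every bipartite pure state |φ⟩_AB = Σ_{i,j} c_{ij} |i⟩_A|j⟩_B with Σ_{i,j} |c_{ij}|² = 1, one has C_f(|φ⟩_AB) ≥ Σ_{j : p_j > 0} p_j · C_f(|φ_j⟩_A) + Σ_{i : q_i > 0} q_i · C_f(|φ_i⟩_B), where p_j = Σ_i |c_{ij}|², |φ_j⟩_A = (1/√p_j) Σ_i c_{ij} |i⟩_A, q_i = Σ_j |c_{ij}|², and |φ_i⟩_B = (1/√q_i) Σ_j c_{ij} |j⟩_B. Then C_f is superadditive: for every bipartite density matrix ρ_AB, C_f(ρ_AB) ≥ C_f(ρ_A) + C_f(ρ_B), where ρ_A = Tr_B ρ_AB and ρ_B = Tr_A ρ_AB. -/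
noncomputable section

open scoped ComplexOrder

/-- The outer product `|φ⟩⟨φ|` of a vector with itself. -/
def outer {ι : Type} (φ : ι → ℂ) : Matrix ι ι ℂ :=
  Matrix.of fun i i' => φ i * (starRingEnd ℂ) (φ i')

/-- A pure state: a unit vector in the fixed computational basis. -/
def IsUnitVec {ι : Type} [Fintype ι] (φ : ι → ℂ) : Prop :=
  ∑ i, ‖φ i‖ ^ 2 = 1

/-- A density matrix: positive semidefinite with trace one. -/
def IsDensity {ι : Type} [Fintype ι] (ρ : Matrix ι ι ℂ) : Prop :=
  ρ.PosSemidef ∧ ρ.trace = 1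

/-- The coherence measure on pure states: `C_f(|φ⟩) = f((|c_i|²)_i)`. -/
def pureCoh (f : (ι : Type) → [Fintype ι] → (ι → ℝ) → ℝ)
    {ι : Type} [Fintype ι] (φ : ι → ℂ) : ℝ :=
  f ι fun i => ‖φ i‖ ^ 2

/-- The convex roof extension of `C_f` to density matrices:
`C_f(ρ) = inf Σ_k p_k C_f(|φ_k⟩)` over finite ensembles `ρ = Σ_k p_k |φ_k⟩⟨φ_k|`. -/
def mixedCoh (f : (ι : Type) → [Fintype ι] → (ι → ℝ) → ℝ)
    {ι : Type} [Fintype ι] (ρ : Matrix ι ι ℂ) : ℝ :=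
  sInf { x : ℝ | ∃ (K : ℕ) (p : Fin K → ℝ) (φ : Fin K → ι → ℂ),
    (∀ k, 0 ≤ p k) ∧ (∑ k, p k) = 1 ∧ (∀ k, IsUnitVec (φ k)) ∧
    ρ = ∑ k, Complex.ofReal (p k) • outer (φ k) ∧
    x = ∑ k, p k * pureCoh f (φ k) }

/-!
Fix an ensemble `ρ_AB = Σ_k p_k |φ_k⟩⟨φ_k|`. Measuring `B` in the computational basis splits
each `|φ_k⟩` into the conditional states `|φ_{k,j}⟩_A` with weights `p_k p_{k,j}`, and these form
an ensemble of `ρ_A`; symmetrically for `ρ_B`. Hence `C_f(ρ_A) + C_f(ρ_B)` is at most the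
`p`-average of the right-hand sides of the pure-state inequality, so at most
`Σ_k p_k C_f(|φ_k⟩)`. Taking the infimum over ensembles of `ρ_AB` gives the claim.
-/

open scoped MatrixOrder

section Vectors

variable {ι : Type} [Fintype ι]

def sqNorm (v : ι → ℂ) : ℝ :=
  ∑ i, ‖v i‖ ^ 2

lemma sqNorm_nonneg (v : ι → ℂ) : 0 ≤ sqNorm v :=
  Finset.sum_nonneg fun _ _ => sq_nonneg _

lemma eq_zero_of_sqNorm_eq_zero {v : ι → ℂ} (h : sqNorm v = 0) (i : ι) : v i = 0 := by
  simpa using (Finset.sum_eq_zero_iff_of_nonneg fun i _ => sq_nonneg ‖v i‖).mp h i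
    (Finset.mem_univ i)

lemma IsUnitVec.comp_equiv {κ : Type} [Fintype κ] {v : ι → ℂ} (hv : IsUnitVec v) (e : κ ≃ ι) :
    IsUnitVec (v ∘ e) :=
  (Equiv.sum_comp e fun i => ‖v i‖ ^ 2).trans hv

/-- The zero vector is sent to `|i₀⟩`, so that the result is always a pure state. -/
def toUnitVec [DecidableEq ι] (i₀ : ι) (v : ι → ℂ) : ι → ℂ :=
  if 0 < sqNorm v then fun i => v i / (√(sqNorm v) : ℂ) else Pi.single i₀ 1

variable [DecidableEq ι] (i₀ : ι)

lemma isUnitVec_toUnitVec (v : ι → ℂ) : IsUnitVec (toUnitVec i₀ v) := by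
  unfold IsUnitVec toUnitVec
  split_ifs with h
  · simp only [norm_div, Complex.norm_real, Real.norm_eq_abs, abs_of_nonneg (Real.sqrt_nonneg _),
      div_pow, Real.sq_sqrt (sqNorm_nonneg v), ← Finset.sum_div]
    exact div_self h.ne'
  · simp [Pi.single_apply, apply_ite (fun z : ℂ => ‖z‖ ^ 2)]

lemma sqNorm_smul_outer_toUnitVec (v : ι → ℂ) :
    (sqNorm v : ℂ) • outer (toUnitVec i₀ v) = outer v := by
  rcases (sqNorm_nonneg v).lt_or_eq with h | h
  · have hs : (√(sqNorm v) : ℂ) * (√(sqNorm v) : ℂ) = sqNorm v := by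
      rw [← Complex.ofReal_mul, Real.mul_self_sqrt h.le]
    have hne : (sqNorm v : ℂ) ≠ 0 := Complex.ofReal_ne_zero.mpr h.ne'
    ext i i'
    simp only [toUnitVec, if_pos h, outer, Matrix.smul_apply, Matrix.of_apply, smul_eq_mul,
      map_div₀, Complex.conj_ofReal, div_mul_div_comm, hs]
    field_simp
  · ext i i'
    simp [outer, eq_zero_of_sqNorm_eq_zero h.symm, h.symm]

lemma sqNorm_mul_pureCoh_toUnitVec (f : (ι : Type) → [Fintype ι] → (ι → ℝ) → ℝ) (v : ι → ℂ) :
    sqNorm v * pureCoh f (toUnitVec i₀ v) =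
      if 0 < sqNorm v then sqNorm v * pureCoh f (fun i => v i / (√(sqNorm v) : ℂ)) else 0 := by
  unfold toUnitVec
  split_ifs with h
  · rfl
  · simp [le_antisymm (not_lt.mp h) (sqNorm_nonneg v)]

end Vectors

lemma trace_outer {ι : Type} [Fintype ι] (v : ι → ℂ) : (outer v).trace = sqNorm v := by
  simp [Matrix.trace, outer, sqNorm, Complex.mul_conj, Complex.normSq_eq_norm_sq]

lemma IsDensity.nonempty {ι : Type} [Fintype ι] {ρ : Matrix ι ι ℂ} (hρ : IsDensity ρ) :
    Nonempty ι := by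
  by_contra h
  have : IsEmpty ι := not_nonempty_iff.mp h
  simpa [Matrix.trace] using hρ.2

lemma submatrix_sum_smul_outer {ι κ K : Type} [Fintype K] (c : K → ℂ) (φ : K → ι → ℂ)
    (e : κ → ι) :
    (∑ k, c k • outer (φ k)).submatrix e e = ∑ k, c k • outer (φ k ∘ e) := by
  ext
  simp [outer, Matrix.sum_apply]

section Ensembles

variable (f : (ι : Type) → [Fintype ι] → (ι → ℝ) → ℝ) {ι : Type} [Fintype ι]

def ensembleValues (ρ : Matrix ι ι ℂ) : Set ℝ :=
  { x : ℝ | ∃ (K : ℕ) (p : Fin K → ℝ) (φ : Fin K → ι → ℂ),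
    (∀ k, 0 ≤ p k) ∧ (∑ k, p k) = 1 ∧ (∀ k, IsUnitVec (φ k)) ∧
    ρ = ∑ k, Complex.ofReal (p k) • outer (φ k) ∧
    x = ∑ k, p k * pureCoh f (φ k) }

lemma bddBelow_ensembleValues
    (hf : ∀ (ι : Type) [Fintype ι] (v : ι → ℝ), (∀ i, 0 ≤ v i) → 0 ≤ f ι v)
    (ρ : Matrix ι ι ℂ) : BddBelow (ensembleValues f ρ) := by
  refine ⟨0, ?_⟩
  rintro _ ⟨K, p, φ, hp, -, -, -, rfl⟩
  exact Finset.sum_nonneg fun k _ => mul_nonneg (hp k) (hf _ _ fun _ => sq_nonneg _)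

lemma sum_mem_ensembleValues [DecidableEq ι] (i₀ : ι) {K : Type} [Fintype K]
    {ρ : Matrix ι ι ℂ} (p : K → ℝ) (v : K → ι → ℂ) (hp : ∀ k, 0 ≤ p k)
    (h1 : ∑ k, p k * sqNorm (v k) = 1) (hρ : ρ = ∑ k, (p k : ℂ) • outer (v k)) :
    ∑ k, p k * (sqNorm (v k) * pureCoh f (toUnitVec i₀ (v k))) ∈ ensembleValues f ρ := by
  let e := (Fintype.equivFin K).symm
  refine ⟨Fintype.card K, fun n => p (e n) * sqNorm (v (e n)), fun n => toUnitVec i₀ (v (e n)),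
    fun n => mul_nonneg (hp _) (sqNorm_nonneg _), ?_, fun n => isUnitVec_toUnitVec i₀ _, ?_, ?_⟩
  · exact (e.sum_comp fun k => p k * sqNorm (v k)).trans h1
  · rw [hρ, ← e.sum_comp]
    simp only [Complex.ofReal_mul, mul_smul, sqNorm_smul_outer_toUnitVec]
  · rw [← e.sum_comp]
    simp only [mul_assoc]

lemma mixedCoh_le_of_eq_sum_smul_outer
    (hf : ∀ (ι : Type) [Fintype ι] (v : ι → ℝ), (∀ i, 0 ≤ v i) → 0 ≤ f ι v)
    [DecidableEq ι] (i₀ : ι) {K : Type} [Fintype K] {ρ : Matrix ι ι ℂ} (p : K → ℝ)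
    (v : K → ι → ℂ) (hp : ∀ k, 0 ≤ p k) (h1 : ∑ k, p k * sqNorm (v k) = 1)
    (hρ : ρ = ∑ k, (p k : ℂ) • outer (v k)) :
    mixedCoh f ρ ≤ ∑ k, p k * (sqNorm (v k) * pureCoh f (toUnitVec i₀ (v k))) :=
  csInf_le (bddBelow_ensembleValues f hf ρ) (sum_mem_ensembleValues f i₀ p v hp h1 hρ)

/-- A density matrix `ρ = B⋆B` is the ensemble of the rows of `B`. -/
lemma ensembleValues_nonempty [DecidableEq ι] {ρ : Matrix ι ι ℂ} (hρ : IsDensity ρ) :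
    (ensembleValues f ρ).Nonempty := by
  obtain ⟨B, hB⟩ := CStarAlgebra.nonneg_iff_eq_star_mul_self.mp hρ.1.nonneg
  have hρ_sum : ρ = ∑ k, ((1 : ℝ) : ℂ) • outer (star (B k)) := by
    ext i i'
    simp [hB, Matrix.mul_apply, Matrix.sum_apply, outer]
  have h1 : ∑ k, 1 * sqNorm (star (B k)) = 1 := by
    have := congrArg Matrix.trace hρ_sum
    simp only [hρ.2, Matrix.trace_sum, trace_outer, Complex.ofReal_one, one_smul] at this
    simp only [one_mul]
    exact_mod_cast this.symm
  have : Nonempty ι := hρ.nonempty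
  exact ⟨_, sum_mem_ensembleValues f (Classical.arbitrary ι) _ _ (fun _ => zero_le_one) h1 hρ_sum⟩

end Ensembles

section PartialTrace

variable {ι κ : Type} [Fintype κ]

def partialTraceRight (ρ : Matrix (ι × κ) (ι × κ) ℂ) : Matrix ι ι ℂ :=
  Matrix.of fun i i' => ∑ j, ρ (i, j) (i', j)

lemma partialTraceRight_sum_smul_outer {K : Type} [Fintype K] (p : K → ℝ)
    (φ : K → ι × κ → ℂ) :
    partialTraceRight (∑ k, (p k : ℂ) • outer (φ k)) =
      ∑ kj : K × κ, (p kj.1 : ℂ) • outer (fun i => φ kj.1 (i, kj.2)) := by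
  ext i i'
  simp only [partialTraceRight, outer, Matrix.of_apply, Matrix.sum_apply, Matrix.smul_apply,
    smul_eq_mul, Fintype.sum_prod_type]
  exact Finset.sum_comm

variable [Fintype ι]

lemma sum_sqNorm_column (φ : ι × κ → ℂ) : ∑ j, sqNorm (fun i => φ (i, j)) = sqNorm φ := by
  simp only [sqNorm]
  rw [Fintype.sum_prod_type, Finset.sum_comm]

/-- The term `Σ_{j : p_j > 0} p_j C_f(|φ_j⟩_A)` of the pure-state condition. -/
def condCoh (f : (ι : Type) → [Fintype ι] → (ι → ℝ) → ℝ) (φ : ι × κ → ℂ) : ℝ :=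
  ∑ j, if 0 < sqNorm (fun i => φ (i, j)) then
    sqNorm (fun i => φ (i, j)) *
      pureCoh f (fun i => φ (i, j) / (√(sqNorm fun i => φ (i, j)) : ℂ))
  else 0

lemma mixedCoh_partialTraceRight_le (f : (ι : Type) → [Fintype ι] → (ι → ℝ) → ℝ)
    (hf : ∀ (ι : Type) [Fintype ι] (v : ι → ℝ), (∀ i, 0 ≤ v i) → 0 ≤ f ι v)
    [DecidableEq ι] (i₀ : ι) {K : Type} [Fintype K] {ρ : Matrix (ι × κ) (ι × κ) ℂ}
    (p : K → ℝ) (φ : K → ι × κ → ℂ) (hp : ∀ k, 0 ≤ p k) (h1 : ∑ k, p k = 1)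
    (hφ : ∀ k, IsUnitVec (φ k)) (hρ : ρ = ∑ k, (p k : ℂ) • outer (φ k)) :
    mixedCoh f (partialTraceRight ρ) ≤ ∑ k, p k * condCoh f (φ k) := by
  have hweights : ∑ kj : K × κ, p kj.1 * sqNorm (fun i => φ kj.1 (i, kj.2)) = 1 := by
    have hφ' : ∀ k, sqNorm (φ k) = 1 := hφ
    simp only [Fintype.sum_prod_type, ← Finset.mul_sum, sum_sqNorm_column, hφ', mul_one, h1]
  calc mixedCoh f (partialTraceRight ρ)
      ≤ ∑ kj : K × κ, p kj.1 * (sqNorm (fun i => φ kj.1 (i, kj.2)) *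
          pureCoh f (toUnitVec i₀ fun i => φ kj.1 (i, kj.2))) :=
        mixedCoh_le_of_eq_sum_smul_outer f hf i₀ _ _ (fun kj => hp kj.1) hweights
          (hρ ▸ partialTraceRight_sum_smul_outer p φ)
    _ = ∑ k, p k * condCoh f (φ k) := by
        simp only [Fintype.sum_prod_type, ← Finset.mul_sum, sqNorm_mul_pureCoh_toUnitVec]
        rfl

end PartialTrace

/-- if for every bipartite pure state `|φ⟩_AB = Σ_{ij} c_{ij}|i⟩|j⟩` one has
`C_f(|φ⟩_AB) ≥ Σ_{j : p_j > 0} p_j C_f(|φ_j⟩_A) + Σ_{i : q_i > 0} q_i C_f(|φ_i⟩_B)`, then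
`C_f` is superadditive: `C_f(ρ_AB) ≥ C_f(ρ_A) + C_f(ρ_B)` for every bipartite density
matrix. -/
theorem superadditivity_of_pure_condition_bipartite'
    (f : (ι : Type) → [Fintype ι] → (ι → ℝ) → ℝ)
    (hf : ∀ (ι : Type) [Fintype ι] (v : ι → ℝ), (∀ i, 0 ≤ v i) → 0 ≤ f ι v)
    (hyp : ∀ (dA dB : ℕ) (c : Fin dA → Fin dB → ℂ),
      (∑ i, ∑ j, ‖c i j‖ ^ 2) = 1 →
      pureCoh f (fun p : Fin dA × Fin dB => c p.1 p.2) ≥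
        (∑ j : Fin dB,
          (if 0 < (∑ i, ‖c i j‖ ^ 2) then
            (∑ i, ‖c i j‖ ^ 2) *
              pureCoh f (fun i : Fin dA =>
                c i j / Complex.ofReal (Real.sqrt (∑ i', ‖c i' j‖ ^ 2)))
          else 0))
        + ∑ i : Fin dA,
            (if 0 < (∑ j, ‖c i j‖ ^ 2) then
              (∑ j, ‖c i j‖ ^ 2) *
                pureCoh f (fun j : Fin dB =>
                  c i j / Complex.ofReal (Real.sqrt (∑ j', ‖c i j'‖ ^ 2)))
            else 0)) :
    ∀ (dA dB : ℕ) (ρ : Matrix (Fin dA × Fin dB) (Fin dA × Fin dB) ℂ),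
      IsDensity ρ →
      mixedCoh f ρ ≥
        mixedCoh f (Matrix.of fun i i' : Fin dA => ∑ j, ρ (i, j) (i', j))
        + mixedCoh f (Matrix.of fun j j' : Fin dB => ∑ i, ρ (i, j) (i, j')) := by
  intro dA dB ρ hρ
  obtain ⟨i₀, j₀⟩ := hρ.nonempty.some
  refine le_csInf (ensembleValues_nonempty f hρ) ?_
  rintro _ ⟨K, p, φ, hp, h1, hφ, rfl, rfl⟩
  -- The two sums in `hyp` are `condCoh` of `φ k` and of `φ k` with its factors swapped, and
  -- `ρ_B` is `partialTraceRight` of `ρ` with its factors swapped.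
  have hpure : ∀ k, condCoh f (φ k) + condCoh f (φ k ∘ Prod.swap) ≤ pureCoh f (φ k) := fun k =>
    hyp dA dB (fun i j => φ k (i, j)) ((Fintype.sum_prod_type _).symm.trans (hφ k))
  calc _ ≤ ∑ k, p k * condCoh f (φ k) + ∑ k, p k * condCoh f (φ k ∘ Prod.swap) :=
        add_le_add (mixedCoh_partialTraceRight_le f hf i₀ p φ hp h1 hφ rfl)
          (mixedCoh_partialTraceRight_le f hf j₀ p _ hp h1
            (fun k => (hφ k).comp_equiv (Equiv.prodComm _ _)) (submatrix_sum_smul_outer _ _ _))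
    _ ≤ ∑ k, p k * pureCoh f (φ k) := by
        rw [← Finset.sum_add_distrib]
        exact Finset.sum_le_sum fun k _ => by
          rw [← mul_add]
          exact mul_le_mul_of_nonneg_left (hpure k) (hp k)

end
end

section
/- Let f be a family of functions assigning a nonnegative real number f(v) to each finitely-indexed family v of nonnegative reals, and let C_f be the associated convex roof coherence measure. Suppose that for every n-partite pure state |α⟩ = Σ_{i₁,…,iₙ} c_{i₁…iₙ} |i₁⟩_{A₁}⋯|iₙ⟩_{Aₙ} with Σ |c_{i₁…iₙ}|² = 1, one has C_f(|α⟩) ≥ Σ_{j=1}^{n} Σ_{i_j : p^{(j)}_{i_j} > 0} p^{(j)}_{i_j} C_f(|α^{(j)}_{i_j}⟩), where p^{(j)}_{i_j} = Σ over all other indices of |c_{i₁…iₙ}|² and the unit vectors |α^{(j)}_{i_j}⟩ realize the decompositions ρ_{A_j} = Σ_{i_j} p^{(j)}_{i_j} |α^{(j)}_{i_j}⟩⟨α^{(j)}_{i_j}| of the reduced states of |α⟩⟨α|. Then C_f is superadditive for n-partite states: for every n-partite density matrix ρ_{A₁…Aₙ}, C_f(ρ_{A₁…Aₙ}) ≥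 Σ_{j=1}^{n} C_f(ρ_{A_j}), where ρ_{A_j} is the reduced density matrix on party j. -/
noncomputable section

open scoped ComplexOrder

/-!
Take any ensemble `ρ = ∑ₖ pₖ |φₖ⟩⟨φₖ|`. The reduced state of `|φₖ⟩⟨φₖ|` on party `j` is
positive semidefinite with diagonal the marginal distribution `q` of `|φₖ|²` on that party, and
the columns of its square root split it as `∑ᵢ qᵢ |αᵢ⟩⟨αᵢ|` with unit vectors `αᵢ`. Refining
the ensemble this way gives an ensemble of `ρ_{A_j}`, so
`∑ⱼ C_f(ρ_{A_j}) ≤ ∑ₖ pₖ ∑ⱼ ∑ᵢ qᵢ C_f(αᵢ) ≤ ∑ₖ pₖ C_f(φₖ)` by the pure-state hypothesis;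
taking the infimum over ensembles of `ρ` gives the claim.
-/

open scoped Matrix

lemma isUnitVec_single {ι : Type} [Fintype ι] [DecidableEq ι] (i : ι) :
    IsUnitVec (Pi.single i 1 : ι → ℂ) := by
  simp [IsUnitVec, Pi.single_apply, apply_ite]

lemma exists_isUnitVec_outer_eq {ι : Type} [Fintype ι] [DecidableEq ι] [Nonempty ι]
    (v : ι → ℂ) :
    ∃ u : ι → ℂ, IsUnitVec u ∧ outer v = ((∑ i, ‖v i‖ ^ 2 : ℝ) : ℂ) • outer u := by
  set r := ∑ i, ‖v i‖ ^ 2 with hr_def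
  have hr0 : 0 ≤ r := Finset.sum_nonneg fun i _ => sq_nonneg ‖v i‖
  rcases hr0.eq_or_lt with hr | hr
  · have hv : v = 0 := by
      ext i
      have := (Finset.sum_eq_zero_iff_of_nonneg fun i _ => sq_nonneg ‖v i‖).1 hr.symm i
        (Finset.mem_univ i)
      simpa using this
    refine ⟨Pi.single (Classical.arbitrary ι) 1, isUnitVec_single _, ?_⟩
    ext
    simp [← hr, hv, outer]
  · have hs : (Real.sqrt r : ℂ) ≠ 0 := by exact_mod_cast (Real.sqrt_pos.2 hr).ne'
    refine ⟨(Real.sqrt r : ℂ)⁻¹ • v, ?_, ?_⟩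
    · simp only [IsUnitVec, Pi.smul_apply, smul_eq_mul, norm_mul, norm_inv, mul_pow,
        ← Finset.mul_sum, Complex.norm_real, Real.norm_eq_abs, sq_abs, inv_pow,
        ← hr_def, Real.sq_sqrt hr.le]
      exact inv_mul_cancel₀ hr.ne'
    · ext i i'
      have hsq : (r : ℂ) = (Real.sqrt r : ℂ) * (Real.sqrt r : ℂ) := by
        exact_mod_cast (Real.mul_self_sqrt hr.le).symm
      simp only [outer, Matrix.of_apply, Matrix.smul_apply, Pi.smul_apply, smul_eq_mul,
        map_mul, map_inv₀, Complex.conj_ofReal, hsq]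
      field_simp

lemma mul_conjTranspose_eq_sum_outer {ι κ : Type} [Fintype κ] (M : Matrix ι κ ℂ) :
    M * Mᴴ = ∑ k, outer fun i => M i k := by
  ext i i'
  simp [Matrix.mul_apply, Matrix.sum_apply, outer]

lemma conjTranspose_mul_self_apply_self {ι κ : Type} [Fintype ι] (M : Matrix ι κ ℂ)
    (k : κ) : (Mᴴ * M) k k = ((∑ i, ‖M i k‖ ^ 2 : ℝ) : ℂ) := by
  simp [Matrix.mul_apply, Complex.conj_mul']

open scoped MatrixOrder in
lemma Matrix.PosSemidef.exists_eq_sum_diag_smul_outer {ι : Type} [Fintype ι] [DecidableEq ι]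
    {σ : Matrix ι ι ℂ} (hσ : σ.PosSemidef) :
    ∃ α : ι → ι → ℂ, (∀ m, IsUnitVec (α m)) ∧ σ = ∑ m, σ m m • outer (α m) := by
  -- Decompose `σ = B Bᴴ` along the columns of `B = √σ`; as `B` is Hermitian, the squared
  -- norm of its `m`-th column is `(Bᴴ B) m m = σ m m`.
  set B := CFC.sqrt σ
  have hB : Bᴴ = B := (Matrix.nonneg_iff_posSemidef.1 (CFC.sqrt_nonneg σ)).1
  have hBB : B * B = σ := CFC.sqrt_mul_sqrt_self σ hσ.nonneg
  have hdiag (m : ι) : σ m m = ((∑ i, ‖B i m‖ ^ 2 : ℝ) : ℂ) := by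
    rw [← conjTranspose_mul_self_apply_self, hB, hBB]
  choose α hα hBα using fun m => @exists_isUnitVec_outer_eq ι _ _ ⟨m⟩ fun i => B i m
  refine ⟨α, hα, ?_⟩
  conv_lhs => rw [← hBB]; enter [2]; rw [← hB]
  simp only [mul_conjTranspose_eq_sum_outer, hBα, hdiag]

section ReducedState

variable {ι : Type} [Fintype ι] [DecidableEq ι] {κ : ι → Type} [∀ j, Fintype (κ j)]
  [∀ j, DecidableEq (κ j)]

/-- The partial trace onto party `j`. -/
def reducedState (j : ι) : Matrix (∀ k, κ k) (∀ k, κ k) ℂ →ₗ[ℂ] Matrix (κ j) (κ j) ℂ where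
  toFun ρ := Matrix.of fun i i' =>
    ∑ x : ∀ k, κ k, if x j = i then ρ x (Function.update x j i') else 0
  map_add' ρ σ := by
    ext i i'
    simp only [Matrix.add_apply, Matrix.of_apply, ← Finset.sum_add_distrib]
    exact Finset.sum_congr rfl fun x _ => by split_ifs <;> simp
  map_smul' a ρ := by
    ext i i'
    simp only [Matrix.smul_apply, Matrix.of_apply, Finset.smul_sum, RingHom.id_apply]
    exact Finset.sum_congr rfl fun x _ => by split_ifs <;> simp

def marginal (c : (∀ k, κ k) → ℂ) (j : ι) (i : κ j) : ℝ :=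
  ∑ x : ∀ k, κ k, if x j = i then ‖c x‖ ^ 2 else 0

lemma marginal_nonneg (c : (∀ k, κ k) → ℂ) (j : ι) (i : κ j) : 0 ≤ marginal c j i :=
  Finset.sum_nonneg fun x _ => by split_ifs <;> positivity

lemma sum_marginal (c : (∀ k, κ k) → ℂ) (j : ι) :
    ∑ i, marginal c j i = ∑ x, ‖c x‖ ^ 2 := by
  simp only [marginal]
  rw [Finset.sum_comm]
  simp

lemma reducedState_outer_apply_self (c : (∀ k, κ k) → ℂ) (j : ι) (i : κ j) :
    reducedState j (outer c) i i = marginal c j i := by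
  simp only [reducedState, LinearMap.coe_mk, AddHom.coe_mk, Matrix.of_apply, outer, marginal,
    Complex.ofReal_sum]
  refine Finset.sum_congr rfl fun x _ => ?_
  split_ifs with h
  · rw [← h, Function.update_eq_self, Complex.mul_conj']
    push_cast
    rfl
  · simp

lemma reducedState_outer_eq_mul_conjTranspose (c : (∀ k, κ k) → ℂ) (j : ι) :
    reducedState j (outer c) =
      (Matrix.of fun i y => c ((Equiv.piSplitAt j κ).symm (i, y))) *
        (Matrix.of fun i y => c ((Equiv.piSplitAt j κ).symm (i, y)))ᴴ := by
  set e := Equiv.piSplitAt j κ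
  have update_symm (a b : κ j) (y : ∀ k : {k // k ≠ j}, κ k) :
      Function.update (e.symm (a, y)) j b = e.symm (b, y) := by
    funext k
    by_cases hk : k = j
    · subst hk; simp [e]
    · simp [e, hk]
  ext i i'
  simp only [reducedState, LinearMap.coe_mk, AddHom.coe_mk, Matrix.of_apply, outer,
    Matrix.mul_apply, Matrix.conjTranspose_apply, RCLike.star_def]
  rw [← e.symm.sum_comp, Fintype.sum_prod_type, Finset.sum_eq_single i]
  · simp [e, update_symm]
  · intro a _ ha
    simp [e, ha]
  · simp

lemma reducedState_outer_posSemidef (c : (∀ k, κ k) → ℂ) (j : ι) :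
    (reducedState j (outer c)).PosSemidef := by
  rw [reducedState_outer_eq_mul_conjTranspose]
  exact Matrix.posSemidef_self_mul_conjTranspose _

lemma exists_reducedState_outer_eq_sum (c : (∀ k, κ k) → ℂ) (j : ι) :
    ∃ α : κ j → κ j → ℂ, (∀ i, IsUnitVec (α i)) ∧
      reducedState j (outer c) = ∑ i, (marginal c j i : ℂ) • outer (α i) := by
  simpa only [reducedState_outer_apply_self] using
    (reducedState_outer_posSemidef c j).exists_eq_sum_diag_smul_outer

end ReducedState

section Ensemble

variable {ι κ κ' : Type} [Fintype ι] [Fintype κ] [Fintype κ']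

structure IsEnsemble (ρ : Matrix ι ι ℂ) (p : κ → ℝ) (φ : κ → ι → ℂ) : Prop where
  nonneg : ∀ k, 0 ≤ p k
  sum_eq_one : ∑ k, p k = 1
  isUnitVec : ∀ k, IsUnitVec (φ k)
  eq_sum : ρ = ∑ k, (p k : ℂ) • outer (φ k)

lemma IsEnsemble.comp_equiv {ρ : Matrix ι ι ℂ} {p : κ → ℝ} {φ : κ → ι → ℂ}
    (h : IsEnsemble ρ p φ) (e : κ' ≃ κ) : IsEnsemble ρ (p ∘ e) (φ ∘ e) where
  nonneg k := h.nonneg (e k)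
  sum_eq_one := by rw [← h.sum_eq_one, ← e.sum_comp]; rfl
  isUnitVec k := h.isUnitVec (e k)
  eq_sum := by rw [h.eq_sum, ← e.sum_comp]; rfl

lemma IsEnsemble.exists_fin_reindex (f : (ι : Type) → [Fintype ι] → (ι → ℝ) → ℝ)
    {ρ : Matrix ι ι ℂ} {p : κ → ℝ} {φ : κ → ι → ℂ} (h : IsEnsemble ρ p φ) :
    ∃ (K : ℕ) (p' : Fin K → ℝ) (φ' : Fin K → ι → ℂ),
      (∀ k, 0 ≤ p' k) ∧ (∑ k, p' k) = 1 ∧ (∀ k, IsUnitVec (φ' k)) ∧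
      ρ = ∑ k, Complex.ofReal (p' k) • outer (φ' k) ∧
      ∑ k, p k * pureCoh f (φ k) = ∑ k, p' k * pureCoh f (φ' k) := by
  have h' := h.comp_equiv (Fintype.equivFin κ).symm
  exact ⟨_, _, _, h'.nonneg, h'.sum_eq_one, h'.isUnitVec, h'.eq_sum,
    ((Fintype.equivFin κ).symm.sum_comp fun k => p k * pureCoh f (φ k)).symm⟩

lemma IsEnsemble.mixedCoh_le {f : (ι : Type) → [Fintype ι] → (ι → ℝ) → ℝ}
    (hf : ∀ φ : ι → ℂ, 0 ≤ pureCoh f φ) {ρ : Matrix ι ι ℂ} {p : κ → ℝ} {φ : κ → ι → ℂ}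
    (h : IsEnsemble ρ p φ) : mixedCoh f ρ ≤ ∑ k, p k * pureCoh f (φ k) := by
  refine csInf_le ⟨0, ?_⟩ (h.exists_fin_reindex f)
  rintro _ ⟨K, p', φ', hp', -, -, -, rfl⟩
  exact Finset.sum_nonneg fun k _ => mul_nonneg (hp' k) (hf _)

lemma IsDensity.exists_isEnsemble [DecidableEq ι] {ρ : Matrix ι ι ℂ} (hρ : IsDensity ρ) :
    ∃ (p : ι → ℝ) (φ : ι → ι → ℂ), IsEnsemble ρ p φ := by
  obtain ⟨α, hα, hρα⟩ := hρ.1.exists_eq_sum_diag_smul_outer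
  have hre (m : ι) : ((ρ m m).re : ℂ) = ρ m m :=
    (Complex.eq_re_of_ofReal_le hρ.1.diag_nonneg).symm
  refine ⟨fun m => (ρ m m).re, α, fun m => ?_, ?_, hα, by simpa only [hre] using hρα⟩
  · exact Complex.nonneg_iff.1 hρ.1.diag_nonneg |>.1
  · simpa [Matrix.trace] using congrArg Complex.re hρ.2

lemma le_mixedCoh_of_forall_isEnsemble [DecidableEq ι]
    {f : (ι : Type) → [Fintype ι] → (ι → ℝ) → ℝ} {ρ : Matrix ι ι ℂ} (hρ : IsDensity ρ)
    {a : ℝ} (h : ∀ (K : ℕ) (p : Fin K → ℝ) (φ : Fin K → ι → ℂ),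
      IsEnsemble ρ p φ → a ≤ ∑ k, p k * pureCoh f (φ k)) :
    a ≤ mixedCoh f ρ := by
  obtain ⟨p, φ, hpφ⟩ := hρ.exists_isEnsemble
  refine le_csInf ⟨_, hpφ.exists_fin_reindex f⟩ ?_
  rintro _ ⟨K, p', φ', hp0, hp1, hφ, hρ', rfl⟩
  exact h K p' φ' ⟨hp0, hp1, hφ, hρ'⟩

end Ensemble

lemma IsEnsemble.reducedState {ι K : Type} [Fintype ι] [DecidableEq ι] {κ : ι → Type}
    [∀ j, Fintype (κ j)] [∀ j, DecidableEq (κ j)] [Fintype K]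
    {ρ : Matrix (∀ k, κ k) (∀ k, κ k) ℂ} {p : K → ℝ} {φ : K → (∀ k, κ k) → ℂ}
    (h : IsEnsemble ρ p φ) (j : ι) {α : K → κ j → κ j → ℂ}
    (hα : ∀ k, (∀ i, IsUnitVec (α k i)) ∧
      reducedState j (outer (φ k)) = ∑ i, (marginal (φ k) j i : ℂ) • outer (α k i)) :
    IsEnsemble (reducedState j ρ) (fun ki : K × κ j => p ki.1 * marginal (φ ki.1) j ki.2)
      (fun ki : K × κ j => α ki.1 ki.2) where
  nonneg ki := mul_nonneg (h.nonneg ki.1) (marginal_nonneg _ _ _)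
  sum_eq_one := by
    have hunit (k : K) : ∑ x, ‖φ k x‖ ^ 2 = 1 := h.isUnitVec k
    simpa only [Fintype.sum_prod_type, ← Finset.mul_sum, sum_marginal, hunit, mul_one]
      using h.sum_eq_one
  isUnitVec ki := (hα ki.1).1 ki.2
  eq_sum := by
    simp only [h.eq_sum, map_sum, map_smul, (hα _).2, Finset.smul_sum, smul_smul,
      Fintype.sum_prod_type, Complex.ofReal_mul]

/-- if for every n-partite pure state `|α⟩ = Σ c_{i₁…iₙ} |i₁⟩⋯|iₙ⟩`, with
marginal probabilities `p^{(j)}_{i_j}` and unit vectors `|α^{(j)}_{i_j}⟩` realizing the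
decompositions `ρ_{A_j} = Σ_{i_j} p^{(j)}_{i_j} |α^{(j)}_{i_j}⟩⟨α^{(j)}_{i_j}|` of the
reduced states of `|α⟩⟨α|`, one has
`C_f(|α⟩) ≥ Σ_j Σ_{i_j : p^{(j)}_{i_j} > 0} p^{(j)}_{i_j} C_f(α^{(j)}_{i_j})`,
then `C_f` is superadditive on n-partite density matrices:
`C_f(ρ) ≥ Σ_j C_f(ρ_{A_j})`. -/
theorem superadditivity_of_pure_condition_multipartite
    (f : (ι : Type) → [Fintype ι] → (ι → ℝ) → ℝ)
    (hf : ∀ (ι : Type) [Fintype ι] (v : ι → ℝ), (∀ i, 0 ≤ v i) → 0 ≤ f ι v)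
    (hyp : ∀ (n : ℕ) (d : Fin n → ℕ) (c : (∀ j, Fin (d j)) → ℂ),
      (∑ x : (∀ j, Fin (d j)), ‖c x‖ ^ 2) = 1 →
      ∀ (α : (j : Fin n) → Fin (d j) → (Fin (d j) → ℂ)),
        (∀ j i, IsUnitVec (α j i)) →
        (∀ j : Fin n,
          Matrix.of (fun i i' : Fin (d j) =>
            ∑ x : (∀ k, Fin (d k)),
              if x j = i then c x * (starRingEnd ℂ) (c (Function.update x j i')) else 0)
          = ∑ i : Fin (d j),
              Complex.ofReal (∑ x : (∀ k, Fin (d k)), if x j = i then ‖c x‖ ^ 2 else 0)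
                • outer (α j i)) →
        pureCoh f c ≥
          ∑ j : Fin n, ∑ i : Fin (d j),
            (if 0 < (∑ x : (∀ k, Fin (d k)), if x j = i then ‖c x‖ ^ 2 else 0) then
              (∑ x : (∀ k, Fin (d k)), if x j = i then ‖c x‖ ^ 2 else 0) * pureCoh f (α j i)
            else 0)) :
    ∀ (n : ℕ) (d : Fin n → ℕ) (ρ : Matrix (∀ j, Fin (d j)) (∀ j, Fin (d j)) ℂ),
      IsDensity ρ →
      mixedCoh f ρ ≥
        ∑ j : Fin n,
          mixedCoh f (Matrix.of (fun i i' : Fin (d j) =>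
            ∑ x : (∀ k, Fin (d k)),
              if x j = i then ρ x (Function.update x j i') else 0)) := by
  intro n d ρ hρ
  change ∑ j, mixedCoh f (reducedState j ρ) ≤ mixedCoh f ρ
  refine le_mixedCoh_of_forall_isEnsemble hρ fun K p φ hens => ?_
  choose α hα using fun k j => exists_reducedState_outer_eq_sum (φ k) j
  have hpure (k : Fin K) :
      ∑ j, ∑ i, marginal (φ k) j i * pureCoh f (α k j i) ≤ pureCoh f (φ k) := by
    refine le_of_eq_of_le ?_ (hyp n d (φ k) (hens.isUnitVec k) (α k)
      (fun j i => (hα k j).1 i) (fun j => (hα k j).2))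
    refine Finset.sum_congr rfl fun j _ => Finset.sum_congr rfl fun i _ => ?_
    refine (ite_eq_left_iff.2 fun hq => ?_).symm
    have hzero : marginal (φ k) j i = 0 := le_antisymm (not_lt.1 hq) (marginal_nonneg _ _ _)
    rw [hzero, zero_mul]
  calc ∑ j, mixedCoh f (reducedState j ρ)
      ≤ ∑ j, ∑ k, ∑ i, p k * marginal (φ k) j i * pureCoh f (α k j i) := by
        gcongr with j
        rw [← Fintype.sum_prod_type']
        exact (hens.reducedState j fun k => hα k j).mixedCoh_le
          fun φ => hf _ _ fun _ => sq_nonneg _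
    _ = ∑ k, p k * ∑ j, ∑ i, marginal (φ k) j i * pureCoh f (α k j i) := by
        simp only [Finset.mul_sum, mul_assoc]
        exact Finset.sum_comm
    _ ≤ ∑ k, p k * pureCoh f (φ k) := by
        gcongr with k
        exacts [hens.nonneg k, hpure k]

end
end
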